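/- arXiv:gr-qc/0410141 — 3 statements merged into one kernel-verified Lean document; each statement's English description precedes it below -/
import Mathlib

section
/- Let T₁ and T₂ be two spanning trees of a connected finite graph G. Then T₂ can be obtained from T₁ by a finite sequence of elementary moves, where an elementary move removes one edge of the current spanning tree and adds one edge of G not in the tree, both incident to a common vertex of the tree, yielding again a spanning tree. -/
variable {V : Type*}

/-- `s` is the edge set of a spanning tree of `G`: all its edges are edges of `G`,
and the graph formed by these edges is a tree on the full vertex set. -/
def IsSpanningTreeEdges (G : SimpleGraph V) (s : Finset (Sym2 V)) : Prop :=
  ↑s ⊆ G.edgeSet ∧ (SimpleGraph.fromEdgeSet (↑s : Set (Sym2 V))).IsTree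

/-- An elementary move on spanning trees of `G`: remove an edge `e` of the current spanning
tree and add an edge `f` of `G` not in the tree, both incident to a common vertex `v`,
in such a way that the result is again a spanning tree. -/
def ElemMove [DecidableEq V] (G : SimpleGraph V) (s t : Finset (Sym2 V)) : Prop :=
  ∃ e ∈ s, ∃ f ∈ G.edgeSet, f ∉ s ∧ (∃ v : V, v ∈ e ∧ v ∈ f) ∧
    t = insert f (s.erase e) ∧ IsSpanningTreeEdges G t

/-!
Given spanning trees `s ≠ t`, pick an edge `f = ab` of `t \ s`. The `s`-path from `a` to `b`
contains an edge `e ∉ t` (otherwise `t` would contain a cycle), and `s - e + f` is a spanning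
tree with one more edge in common with `t`. This exchange is realised by elementary moves:
if the path is `a = v₀, v₁, …, vₖ = b`, trading `v₀v₁` for `v₀b` leaves a tree in which
`v₁, …, vₖ, v₀` is a path with `e` one step closer to its start, and exchanging `e` for `v₁v₀`
there again yields `s - e + f`.
-/

open SimpleGraph

lemma SimpleGraph.Walk.mem_of_mem_edges_fromEdgeSet {s : Set (Sym2 V)} {u v : V}
    (p : (fromEdgeSet s).Walk u v) {e : Sym2 V} (he : e ∈ p.edges) : e ∈ s :=
  (edgeSet_fromEdgeSet s ▸ p.edges_subset_edgeSet he).1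

lemma Finset.insert_erase_insert_erase {α : Type*} [DecidableEq α] {s : Finset α} {x y e : α}
    (hx : x ∈ s) (hex : e ≠ x) (hey : e ≠ y) :
    insert x ((insert y (s.erase x)).erase e) = insert y (s.erase e) := by
  rw [Finset.erase_insert_of_ne hey.symm, Finset.insert_comm, Finset.erase_right_comm,
    Finset.insert_erase (Finset.mem_erase.2 ⟨hex.symm, hx⟩)]

lemma SimpleGraph.nat_card_edgeSet_fromEdgeSet {G : SimpleGraph V} {s : Finset (Sym2 V)}
    (hs : ↑s ⊆ G.edgeSet) : Nat.card (fromEdgeSet (s : Set (Sym2 V))).edgeSet = s.card := by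
  have : (fromEdgeSet (s : Set (Sym2 V))).edgeSet = s := by
    rw [edgeSet_fromEdgeSet, sdiff_eq_left, Set.disjoint_left]
    exact fun e he hd => G.not_isDiag_of_mem_edgeSet (hs he) hd
  rw [this, Nat.card_coe_set_eq, Set.ncard_coe_finset]

lemma exists_isPath_after_first_edge_exchange [DecidableEq V] {r : Finset (Sym2 V)}
    {a c d : V} (hac : a ≠ c) {h : (fromEdgeSet (r : Set (Sym2 V))).Adj a d}
    {q : (fromEdgeSet (r : Set (Sym2 V))).Walk d c} (hq : (Walk.cons h q).IsPath) :
    ∃ p : (fromEdgeSet (↑(insert s(a, c) (r.erase s(a, d))) : Set (Sym2 V))).Walk d a,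
      p.IsPath ∧ p.edges = q.edges ++ [s(c, a)] := by
  obtain ⟨hq', haq⟩ := Walk.cons_isPath_iff h q |>.1 hq
  have had : s(a, d) ∉ q.edges := (List.nodup_cons.1 hq.isTrail.edges_nodup).1
  have hsub : ∀ z ∈ q.edges,
      z ∈ (fromEdgeSet (↑(insert s(a, c) (r.erase s(a, d))) : Set (Sym2 V))).edgeSet := by
    intro z hz
    have hz' := q.edges_subset_edgeSet hz
    simp only [edgeSet_fromEdgeSet, Set.mem_sdiff, Finset.coe_insert, Finset.coe_erase,
      Set.mem_insert_iff, Set.mem_singleton_iff, Finset.mem_coe] at hz' ⊢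
    exact ⟨Or.inr ⟨hz'.1, fun hza => had (hza ▸ hz)⟩, hz'.2⟩
  have hca : (fromEdgeSet (↑(insert s(a, c) (r.erase s(a, d))) : Set (Sym2 V))).Adj c a := by
    simp [Sym2.eq_swap, hac.symm]
  refine ⟨(q.transfer _ hsub).concat hca, (hq'.transfer hsub).concat (by simpa) hca, ?_⟩
  rw [Walk.edges_concat, Walk.edges_transfer, List.concat_eq_append]

lemma isSpanningTreeEdges_iff [Finite V] {G : SimpleGraph V} {s : Finset (Sym2 V)} :
    IsSpanningTreeEdges G s ↔
      ↑s ⊆ G.edgeSet ∧ (fromEdgeSet (s : Set (Sym2 V))).Connected ∧ s.card + 1 = Nat.card V := by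
  rw [IsSpanningTreeEdges, isTree_iff_connected_and_card]
  constructor
  · rintro ⟨hs, hconn, hcard⟩
    exact ⟨hs, hconn, nat_card_edgeSet_fromEdgeSet hs ▸ hcard⟩
  · rintro ⟨hs, hconn, hcard⟩
    exact ⟨hs, hconn, (nat_card_edgeSet_fromEdgeSet hs).symm ▸ hcard⟩

namespace IsSpanningTreeEdges

variable {G : SimpleGraph V}

lemma card_add_one [Finite V] {s : Finset (Sym2 V)} (hs : IsSpanningTreeEdges G s) :
    s.card + 1 = Nat.card V :=
  (isSpanningTreeEdges_iff.1 hs).2.2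

lemma eq_of_subset [Finite V] {s t : Finset (Sym2 V)} (hs : IsSpanningTreeEdges G s)
    (ht : IsSpanningTreeEdges G t) (hst : s ⊆ t) : s = t :=
  Finset.eq_of_subset_of_card_le hst (by have := hs.card_add_one; have := ht.card_add_one; omega)

lemma exists_mem_edges_notMem {s t : Finset (Sym2 V)} (ht : IsSpanningTreeEdges G t) {a b : V}
    (habt : s(a, b) ∈ t) (habs : s(a, b) ∉ s) {p : (fromEdgeSet (s : Set (Sym2 V))).Walk a b}
    (hp : p.IsPath) : ∃ e ∈ p.edges, e ∉ t := by
  by_contra! hpt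
  have hsub : ∀ e ∈ p.edges, e ∈ (fromEdgeSet (t : Set (Sym2 V))).edgeSet := by
    intro e he
    have := p.edges_subset_edgeSet he
    rw [edgeSet_fromEdgeSet] at this ⊢
    exact ⟨hpt e he, this.2⟩
  have hab : (fromEdgeSet (t : Set (Sym2 V))).Adj a b := ⟨habt, G.ne_of_adj (ht.1 habt)⟩
  have := (ht.2.isAcyclic.subsingleton_path a b).elim ⟨_, hp.transfer hsub⟩ (Path.singleton hab)
  have hedges := congrArg (fun p : Path _ a b => p.1.edges) this
  simp only [Walk.edges_transfer] at hedges
  exact habs (p.mem_of_mem_edges_fromEdgeSet (by simp [hedges]))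

variable [DecidableEq V]

/-- Adding `s(a, c)` closes a cycle with `q` through `e`, so deleting `e` keeps the graph
connected, while the number of edges is unchanged. -/
lemma exchange [Finite V] {r : Finset (Sym2 V)} (hr : IsSpanningTreeEdges G r) {a c : V}
    (hac : s(a, c) ∈ G.edgeSet) (hacr : s(a, c) ∉ r)
    {q : (fromEdgeSet (r : Set (Sym2 V))).Walk a c} (hq : q.IsPath)
    {e : Sym2 V} (he : e ∈ q.edges) :
    IsSpanningTreeEdges G (insert s(a, c) (r.erase e)) := by
  have her : e ∈ r := q.mem_of_mem_edges_fromEdgeSet he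
  obtain ⟨hr, hconn, hcard⟩ := isSpanningTreeEdges_iff.1 hr
  set H := fromEdgeSet (↑(insert s(a, c) r) : Set (Sym2 V))
  have hle : fromEdgeSet (r : Set (Sym2 V)) ≤ H := fromEdgeSet_mono (by simp)
  have hca : H.Adj c a := by simp [H, Sym2.eq_swap, (G.ne_of_adj hac).symm]
  have hcycle : (Walk.cons hca (q.mapLe hle)).IsCycle := by
    rw [Walk.cons_isCycle_iff]
    refine ⟨hq.mapLe hle, fun h => hacr ?_⟩
    rw [Walk.edges_mapLe_eq_edges, Sym2.eq_swap] at h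
    exact q.mem_of_mem_edges_fromEdgeSet h
  have hbridge : ¬ H.IsBridge e := fun hb =>
    hb.notMem_edges_of_isCycle hcycle (by simp [he])
  refine isSpanningTreeEdges_iff.2 ⟨?_, ?_, ?_⟩
  · simp only [Finset.coe_insert, Set.insert_subset_iff]
    exact ⟨hac, (Finset.coe_subset.2 (r.erase_subset e)).trans hr⟩
  · induction e with | h x y =>
    convert (hconn.mono hle).connected_delete_edge_of_not_isBridge hbridge using 1
    rw [deleteEdges_fromEdgeSet]
    congr 1
    ext z
    simp only [Finset.coe_insert, Finset.coe_erase, Set.mem_insert_iff, Set.mem_sdiff,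
      Set.mem_singleton_iff, Finset.mem_coe]
    grind
  · rwa [Finset.card_insert_of_notMem (by simp [hacr]), Finset.card_erase_add_one her]

lemma elemMove_of_mem [Finite V] {r : Finset (Sym2 V)} (hr : IsSpanningTreeEdges G r) {a c : V}
    (hac : s(a, c) ∈ G.edgeSet) (hacr : s(a, c) ∉ r)
    {q : (fromEdgeSet (r : Set (Sym2 V))).Walk a c} (hq : q.IsPath)
    {e : Sym2 V} (he : e ∈ q.edges) (hae : a ∈ e) :
    ElemMove G r (insert s(a, c) (r.erase e)) :=
  ⟨e, q.mem_of_mem_edges_fromEdgeSet he, s(a, c), hac, hacr, ⟨a, hae, Sym2.mem_mk_left a c⟩,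
    rfl, hr.exchange hac hacr hq he⟩

lemma reflTransGen_exchange [Finite V] {r : Finset (Sym2 V)} (hr : IsSpanningTreeEdges G r)
    {a c : V} (hac : s(a, c) ∈ G.edgeSet) (hacr : s(a, c) ∉ r)
    {q : (fromEdgeSet (r : Set (Sym2 V))).Walk a c} (hq : q.IsPath)
    {e : Sym2 V} (he : e ∈ q.edges) :
    Relation.ReflTransGen (ElemMove G) r (insert s(a, c) (r.erase e)) := by
  obtain ⟨l₁, l₂, hsplit⟩ := List.append_of_mem he
  clear he
  induction l₁ generalizing r a c q l₂ with
  | nil =>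
    cases q with
    | nil => simp at hsplit
    | @cons _ d _ h q =>
      rw [Walk.edges_cons, List.nil_append] at hsplit
      obtain rfl : s(a, d) = e := (List.cons_eq_cons.1 hsplit).1
      exact .single (hr.elemMove_of_mem hac hacr hq (by simp) (Sym2.mem_mk_left a d))
  | cons x l₁ ih =>
    cases q with
    | nil => simp at hsplit
    | @cons _ d _ h q =>
      rw [Walk.edges_cons, List.cons_append] at hsplit
      obtain ⟨rfl, hqsplit⟩ := List.cons_eq_cons.1 hsplit
      have hadr : s(a, d) ∈ r := h.1
      have hadq : s(a, d) ∉ q.edges := (List.nodup_cons.1 hq.isTrail.edges_nodup).1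
      have he : e ∈ q.edges := by simp [hqsplit]
      have her : e ∈ r := q.mem_of_mem_edges_fromEdgeSet he
      have hed : e ≠ s(a, d) := fun h => hadq (h ▸ he)
      have hec : e ≠ s(a, c) := fun h => hacr (h ▸ her)
      have hdar' : s(d, a) ∉ insert s(a, c) (r.erase s(a, d)) := by
        rw [Sym2.eq_swap (a := d), Finset.mem_insert, Finset.mem_erase]
        rintro (had | ⟨hne, -⟩)
        · exact hacr (had ▸ hadr)
        · exact hne rfl
      obtain ⟨p, hp, hpe⟩ := exists_isPath_after_first_edge_exchange (G.ne_of_adj hac : a ≠ c) hq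
      have hrest := ih (hr.exchange hac hacr hq (by simp)) (Sym2.eq_swap ▸ hr.1 hadr) hdar' hp
        (l₂ := l₂ ++ [s(c, a)]) (by simp [hpe, hqsplit])
      rw [Sym2.eq_swap (a := d), Finset.insert_erase_insert_erase hadr hed hec] at hrest
      exact .head (hr.elemMove_of_mem hac hacr hq (by simp) (Sym2.mem_mk_left a d)) hrest

lemma reflTransGen_elemMove [Finite V] {s t : Finset (Sym2 V)} (hs : IsSpanningTreeEdges G s)
    (ht : IsSpanningTreeEdges G t) : Relation.ReflTransGen (ElemMove G) s t := by
  induction hn : (s \ t).card generalizing s with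
  | zero =>
    rw [Finset.card_eq_zero, Finset.sdiff_eq_empty_iff_subset] at hn
    rw [hs.eq_of_subset ht hn]
  | succ n ih =>
    obtain ⟨f, hft, hfs⟩ : ∃ f ∈ t, f ∉ s := by
      by_contra! hts
      obtain rfl := ht.eq_of_subset hs hts
      simp at hn
    induction f with | h a b =>
    obtain ⟨p, hp⟩ := hs.2.connected.exists_isPath a b
    obtain ⟨e, hep, het⟩ := ht.exists_mem_edges_notMem hft hfs hp
    refine (hs.reflTransGen_exchange (ht.1 hft) hfs hp hep).trans
      (ih (hs.exchange (ht.1 hft) hfs hp hep) ?_)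
    have hes : e ∈ s \ t := Finset.mem_sdiff.2 ⟨p.mem_of_mem_edges_fromEdgeSet hep, het⟩
    rw [Finset.insert_sdiff_of_mem _ hft, Finset.erase_sdiff_comm, Finset.card_erase_of_mem hes,
      hn, Nat.add_sub_cancel]

end IsSpanningTreeEdges

theorem spanning_trees_connected_by_elementary_moves_general
    [Fintype V] [DecidableEq V] (G : SimpleGraph V)
    (s t : Finset (Sym2 V))
    (hs : IsSpanningTreeEdges G s) (ht : IsSpanningTreeEdges G t) :
    Relation.ReflTransGen (ElemMove G) s t :=
  hs.reflTransGen_elemMove ht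

/-- Any two spanning trees `s`, `t` of a connected finite graph `G` are related by a finite
sequence of elementary moves. -/
theorem spanning_trees_connected_by_elementary_moves
    [Fintype V] [DecidableEq V] (G : SimpleGraph V) (hG : G.Connected)
    (s t : Finset (Sym2 V))
    (hs : IsSpanningTreeEdges G s) (ht : IsSpanningTreeEdges G t) :
    Relation.ReflTransGen (ElemMove G) s t :=
  spanning_trees_connected_by_elementary_moves_general G s t hs ht
end

section
/- For x₁, x₂ ∈ SU(2) and θ₁, θ₂ ∈ [0,2π], the conjugacy class θ₃ of the product x₁ h_{θ₁} x₁⁻¹ · x₂ h_{θ₂} x₂⁻¹ satisfies cos(θ₃/2) = cos(θ₁/2)cos(θ₂/2) − cos(θ) sin(θ₁/2)sin(θ₂/2) for some θ ∈ [0, π], and conversely for each θ ∈ [0,π] there exist such x₁, x₂ realizing that value. -/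
open MeasureTheory Complex Matrix Real

noncomputable section

/-- The group SU(2), realized as the subgroup of the 2×2 unitary group
consisting of matrices of determinant one. -/
def SU2grp : Subgroup (Matrix.unitaryGroup (Fin 2) ℂ) where
  carrier := {g | (g : Matrix (Fin 2) (Fin 2) ℂ).det = 1}
  one_mem' := by simp
  mul_mem' := by
    intro a b ha hb
    simp only [Set.mem_setOf_eq, Matrix.UnitaryGroup.mul_val, Matrix.det_mul] at *
    rw [ha, hb, one_mul]
  inv_mem' := by
    intro a ha
    simp only [Set.mem_setOf_eq] at *
    have h : ((a⁻¹ : Matrix.unitaryGroup (Fin 2) ℂ) : Matrix (Fin 2) (Fin 2) ℂ)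
        = star (a : Matrix (Fin 2) (Fin 2) ℂ) := rfl
    rw [h]
    show ((a : Matrix (Fin 2) (Fin 2) ℂ).conjTranspose).det = 1
    rw [Matrix.det_conjTranspose, ha, star_one]

/-- Elements of SU(2). -/
abbrev SU2 : Type := SU2grp

instance : MeasurableSpace SU2 := borel SU2

/-- The underlying 2×2 complex matrix of an element of SU(2). -/
def SU2.mat (g : SU2) : Matrix (Fin 2) (Fin 2) ℂ :=
  ((g : Matrix.unitaryGroup (Fin 2) ℂ) : Matrix (Fin 2) (Fin 2) ℂ)

/-- The diagonal matrix `h_θ = diag (e^{iθ/2}, e^{-iθ/2})`. -/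
def Hmat (θ : ℝ) : Matrix (Fin 2) (Fin 2) ℂ :=
  !![Complex.exp (θ * Complex.I / 2), 0; 0, Complex.exp (-(θ * Complex.I / 2))]

/-- The rotation matrix `a_θ`. -/
def Amat (θ : ℝ) : Matrix (Fin 2) (Fin 2) ℂ :=
  !![(Real.cos (θ / 2) : ℂ), -(Real.sin (θ / 2) : ℂ);
     (Real.sin (θ / 2) : ℂ), (Real.cos (θ / 2) : ℂ)]

lemma traceHgHg (α β : ℝ) (a c : ℂ) :
    Matrix.trace (Hmat α * !![a, -(starRingEnd ℂ) c; c, (starRingEnd ℂ) a] * Hmat β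
        * star !![a, -(starRingEnd ℂ) c; c, (starRingEnd ℂ) a])
      = Complex.exp (α * Complex.I / 2 + β * Complex.I / 2) * Complex.normSq a
        + Complex.exp (-(α * Complex.I / 2 + β * Complex.I / 2)) * Complex.normSq a
        + Complex.exp (α * Complex.I / 2 - β * Complex.I / 2) * Complex.normSq c
        + Complex.exp (-(α * Complex.I / 2 - β * Complex.I / 2)) * Complex.normSq c := by
  simp only [Matrix.trace_fin_two, Hmat, Matrix.mul_apply, Fin.sum_univ_two,
    Matrix.star_apply, Matrix.cons_val', Matrix.cons_val_zero, Matrix.cons_val_one,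
    Matrix.head_cons, Matrix.empty_val', Matrix.cons_val_fin_one, Matrix.head_fin_const,
    Matrix.of_apply, Matrix.cons_val_zero]
  have h1 : a * (starRingEnd ℂ) a = Complex.normSq a := Complex.mul_conj a
  have h2 : c * (starRingEnd ℂ) c = Complex.normSq c := Complex.mul_conj c
  simp only [star_def, map_neg, RingHom.id_apply, Complex.conj_conj]
  ring_nf
  rw [Complex.exp_add, Complex.exp_add, Complex.exp_add, Complex.exp_add]
  linear_combination
    (Complex.exp (↑α*I*(1/2))*Complex.exp (I*↑β*(1/2))
      + Complex.exp (↑α*I*(-1/2))*Complex.exp (I*↑β*(-1/2)))*h1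
    + (Complex.exp (↑α*I*(1/2))*Complex.exp (I*↑β*(-1/2))
      + Complex.exp (↑α*I*(-1/2))*Complex.exp (I*↑β*(1/2)))*h2
lemma SU2.mat_mul (x y : SU2) : (x*y).mat = x.mat * y.mat := rfl
lemma SU2.mat_inv (x : SU2) : (x⁻¹).mat = star x.mat := rfl
lemma SU2.mat_one : (1 : SU2).mat = 1 := rfl

lemma SU2.structure (g : SU2) :
    g.mat = !![g.mat 0 0, -(starRingEnd ℂ) (g.mat 1 0); g.mat 1 0, (starRingEnd ℂ) (g.mat 0 0)]
      ∧ Complex.normSq (g.mat 0 0) + Complex.normSq (g.mat 1 0) = 1 := by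
  obtain ⟨⟨m, hm⟩, hdet⟩ := g
  have hmm : SU2.mat ⟨⟨m, hm⟩, hdet⟩ = m := rfl
  rw [hmm]
  have hstar : star m = m.adjugate := by
    have h2 : m * m.adjugate = 1 := by
      rw [Matrix.mul_adjugate]
      rw [show m.det = 1 from hdet]; simp
    rw [← Matrix.inv_eq_right_inv h2,
      ← Matrix.inv_eq_right_inv ((Matrix.mem_unitaryGroup_iff).mp hm)]
  rw [Matrix.adjugate_fin_two] at hstar
  have hd : m 1 1 = starRingEnd ℂ (m 0 0) := by
    have := congrFun (congrFun hstar 0) 0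
    simpa [Matrix.star_apply] using this.symm
  have hb : m 0 1 = -starRingEnd ℂ (m 1 0) := by
    have := congrFun (congrFun hstar 0) 1
    simp [Matrix.star_apply] at this
    rw [this]; simp
  constructor
  · conv_lhs => rw [Matrix.eta_fin_two m]
    rw [hd, hb]
  · have h1 : star m * m = 1 := (Matrix.mem_unitaryGroup_iff').mp hm
    have := congrFun (congrFun h1 0) 0
    simp [Matrix.mul_apply, Fin.sum_univ_two, Matrix.star_apply, Matrix.one_apply] at this
    have := congrArg Complex.re this
    simpa [Complex.mul_conj, mul_comm] using this

lemma re_exp_normSq (x : ℝ) (r : ℝ) :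
    (Complex.exp (x * Complex.I / 2) * (r : ℂ)).re = Real.cos (x / 2) * r := by
  have : (x : ℂ) * Complex.I / 2 = ((x / 2 : ℝ) : ℂ) * Complex.I := by push_cast; ring
  rw [this, Complex.mul_re, Complex.exp_ofReal_mul_I_re, Complex.exp_ofReal_mul_I_im]
  simp

lemma key (α β : ℝ) (g : SU2) :
    ((Matrix.trace (Hmat α * g.mat * Hmat β * star g.mat)) / 2).re
      = Real.cos (α/2) * Real.cos (β/2)
        - (Complex.normSq (g.mat 0 0) - Complex.normSq (g.mat 1 0))
            * (Real.sin (α/2) * Real.sin (β/2)) := by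
  obtain ⟨hg, hn⟩ := g.structure
  set a := g.mat 0 0
  set c := g.mat 1 0
  rw [show Hmat α * g.mat * Hmat β * star g.mat
      = Hmat α * !![a, -(starRingEnd ℂ) c; c, (starRingEnd ℂ) a] * Hmat β
        * star !![a, -(starRingEnd ℂ) c; c, (starRingEnd ℂ) a] by rw [← hg]]
  rw [traceHgHg]
  have e1 : (↑α * Complex.I / 2 + ↑β * Complex.I / 2) = ((α + β : ℝ) : ℂ) * Complex.I / 2 := by
    push_cast; ring
  have e2 : (↑α * Complex.I / 2 - ↑β * Complex.I / 2) = ((α - β : ℝ) : ℂ) * Complex.I / 2 := by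
    push_cast; ring
  have e3 : -(((α + β : ℝ) : ℂ) * Complex.I / 2) = ((-(α + β) : ℝ) : ℂ) * Complex.I / 2 := by
    push_cast; ring
  have e4 : -(((α - β : ℝ) : ℂ) * Complex.I / 2) = ((-(α - β) : ℝ) : ℂ) * Complex.I / 2 := by
    push_cast; ring
  rw [e1, e2, e3, e4]
  have hre2 : ∀ z : ℂ, (z / 2).re = z.re / 2 := by
    intro z
    rw [show ((2:ℂ)) = ((2:ℝ):ℂ) by norm_num, Complex.div_ofReal_re]
  rw [hre2]
  simp only [Complex.add_re, re_exp_normSq]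
  rw [show (-(α+β))/2 = -((α+β)/2) by ring, show (-(α-β))/2 = -((α-β)/2) by ring,
    Real.cos_neg, Real.cos_neg,
    show (α+β)/2 = α/2 + β/2 by ring, show (α-β)/2 = α/2 - β/2 by ring,
    Real.cos_add, Real.cos_sub]
  linear_combination (Real.cos (α/2) * Real.cos (β/2)) * hn
lemma trace_reduce (hU : ℝ → SU2) (hUmat : ∀ θ, (hU θ).mat = Hmat θ)
    (θ₁ θ₂ : ℝ) (x₁ x₂ : SU2) :
    Matrix.trace ((x₁ * hU θ₁ * x₁⁻¹ * (x₂ * hU θ₂ * x₂⁻¹)).mat)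
      = Matrix.trace (Hmat θ₁ * (x₁⁻¹ * x₂).mat * Hmat θ₂ * star (x₁⁻¹ * x₂).mat) := by
  simp only [SU2.mat_mul, SU2.mat_inv, hUmat]
  rw [show x₁.mat * Hmat θ₁ * star x₁.mat * (x₂.mat * Hmat θ₂ * star x₂.mat)
      = x₁.mat * (Hmat θ₁ * star x₁.mat * (x₂.mat * Hmat θ₂ * star x₂.mat)) by
    noncomm_ring]
  rw [Matrix.trace_mul_comm]
  rw [show star (star x₁.mat * x₂.mat) = star x₂.mat * x₁.mat by simp]
  noncomm_ring

lemma AU_mem : ∀ θ : ℝ, Amat θ ∈ Matrix.unitaryGroup (Fin 2) ℂ := by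
  intro θ
  rw [Matrix.mem_unitaryGroup_iff]
  ext i j
  fin_cases i <;> fin_cases j <;>
    simp only [Amat, Matrix.mul_apply, Fin.sum_univ_two, Matrix.star_apply,
      Matrix.one_apply, Matrix.cons_val', Matrix.cons_val_zero, Matrix.cons_val_one,
      Matrix.head_cons, Matrix.empty_val', Matrix.cons_val_fin_one, Matrix.head_fin_const,
      Matrix.of_apply, Complex.conj_ofReal, map_neg] <;>
    · norm_num
      simp only [← Complex.cos_conj, ← Complex.sin_conj, map_div₀, Complex.conj_ofReal,
        map_ofNat]
      first
      | ring1
      | linear_combination (Complex.sin_sq_add_cos_sq ((θ:ℂ)/2))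

def AU (θ : ℝ) : SU2 :=
  ⟨⟨Amat θ, AU_mem θ⟩, by
    show (Amat θ).det = 1
    rw [Amat, Matrix.det_fin_two_of]
    norm_cast
    nlinarith [Real.sin_sq_add_cos_sq (θ/2)]⟩

lemma AU_mat (θ : ℝ) : (AU θ).mat = Amat θ := rfl
/-- For `x₁, x₂ ∈ SU(2)` and `θ₁, θ₂ ∈ [0,2π]`, the conjugacy class `θ₃` of the product
`x₁ h_{θ₁} x₁⁻¹ · x₂ h_{θ₂} x₂⁻¹`, determined by `cos (θ₃/2) = (1/2) tr`, satisfies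
`cos (θ₃/2) = cos (θ₁/2) cos (θ₂/2) − cos θ · sin (θ₁/2) sin (θ₂/2)` for some `θ ∈ [0,π]`;
and conversely, for each `θ ∈ [0,π]` there exist `x₁, x₂` realizing that value. -/
theorem conjugacy_class_of_product_SU2
    (hU : ℝ → SU2) (hUmat : ∀ θ, (hU θ).mat = Hmat θ)
    (θ₁ θ₂ : ℝ) (h₁ : θ₁ ∈ Set.Icc 0 (2 * π)) (h₂ : θ₂ ∈ Set.Icc 0 (2 * π)) :
    (∀ x₁ x₂ : SU2, ∃ θ ∈ Set.Icc (0:ℝ) π,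
      ((Matrix.trace ((x₁ * hU θ₁ * x₁⁻¹ * (x₂ * hU θ₂ * x₂⁻¹)).mat)) / 2).re =
        Real.cos (θ₁ / 2) * Real.cos (θ₂ / 2)
          - Real.cos θ * (Real.sin (θ₁ / 2) * Real.sin (θ₂ / 2))) ∧
    (∀ θ ∈ Set.Icc (0:ℝ) π, ∃ x₁ x₂ : SU2,
      ((Matrix.trace ((x₁ * hU θ₁ * x₁⁻¹ * (x₂ * hU θ₂ * x₂⁻¹)).mat)) / 2).re =
        Real.cos (θ₁ / 2) * Real.cos (θ₂ / 2)
          - Real.cos θ * (Real.sin (θ₁ / 2) * Real.sin (θ₂ / 2))) := by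
  constructor
  · intro x₁ x₂
    obtain ⟨hg, hn⟩ := (x₁⁻¹ * x₂).structure
    set p := Complex.normSq ((x₁⁻¹ * x₂).mat 0 0) with hp'
    set q := Complex.normSq ((x₁⁻¹ * x₂).mat 1 0) with hq'
    have hp : 0 ≤ p := Complex.normSq_nonneg _
    have hq : 0 ≤ q := Complex.normSq_nonneg _
    refine ⟨Real.arccos (p - q), ⟨Real.arccos_nonneg _, Real.arccos_le_pi _⟩, ?_⟩
    rw [trace_reduce hU hUmat, key]
    rw [Real.cos_arccos (by linarith) (by linarith)]
  · intro θ hθ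
    refine ⟨1, AU θ, ?_⟩
    rw [trace_reduce hU hUmat, key]
    rw [show ((1:SU2)⁻¹ * AU θ).mat = Amat θ by rw [inv_one, one_mul, AU_mat]]
    have h00 : Amat θ 0 0 = (Real.cos (θ/2) : ℂ) := by simp [Amat]
    have h10 : Amat θ 1 0 = (Real.sin (θ/2) : ℂ) := by simp [Amat]
    rw [h00, h10, Complex.normSq_ofReal, Complex.normSq_ofReal]
    have : Real.cos (θ/2) * Real.cos (θ/2) - Real.sin (θ/2) * Real.sin (θ/2)
        = Real.cos θ := by
      have h1 := Real.cos_two_mul (θ/2)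
      have h2 := Real.sin_sq_add_cos_sq (θ/2)
      rw [show 2 * (θ/2) = θ by ring] at h1
      nlinarith [h1, h2]
    rw [this]

end
end

section
/- The triple of conjugacy classes (θ₁, θ₂, θ₃) ∈ [0,2π]³ can be realized as classes of g₁, g₂ and g₁g₂ in SU(2) if and only if |θ₁ − θ₂| ≤ θ₃ ≤ θ₁ + θ₂ and θ₁ + θ₂ + θ₃ ≤ 4π. -/
open MeasureTheory Complex Matrix Real

noncomputable section

/-!
An element of SU(2) is `!![a, b; -conj b, conj a]` with `|a|² + |b|² = 1`, i.e. a unit quaternion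
`a + b j`. Its class is read off the scalar part `Re a = cos (θ/2)`, and its vector part `v ∈ ℝ³`
then has length `sin (θ/2)`. The scalar part of a product is `Re a₁ Re a₂ - ⟪v₁, v₂⟫`, so by
Cauchy–Schwarz the possible values of `cos (θ₃/2)` fill exactly the interval between
`cos (θ₁/2 + θ₂/2)` and `cos (θ₁/2 - θ₂/2)`; since `cos` is decreasing on `[0, π]`, this is the
system of triangle inequalities.
-/

lemma abs_sum_mul_le_sqrt_mul_sqrt {ι : Type*} (s : Finset ι) (f g : ι → ℝ) :
    |∑ i ∈ s, f i * g i| ≤ √(∑ i ∈ s, f i ^ 2) * √(∑ i ∈ s, g i ^ 2) := by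
  rw [← Real.sqrt_mul (Finset.sum_nonneg fun i _ ↦ sq_nonneg (f i))]
  exact Real.abs_le_sqrt (Finset.sum_mul_sq_le_sq_mul_sq s f g)

open ComplexConjugate

namespace SU2

variable (g : SU2)

lemma det_mat : g.mat.det = 1 := g.2

lemma star_mat_mul_mat : star g.mat * g.mat = 1 :=
  Matrix.mem_unitaryGroup_iff'.mp (g : Matrix.unitaryGroup (Fin 2) ℂ).2

lemma star_mat_eq_adjugate : star g.mat = g.mat.adjugate :=
  calc star g.mat = star g.mat * (g.mat * g.mat.adjugate) := by
        rw [mul_adjugate, det_mat, one_smul, mul_one]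
    _ = g.mat.adjugate := by rw [← mul_assoc, star_mat_mul_mat, one_mul]

lemma mat_one_one : g.mat 1 1 = conj (g.mat 0 0) := by
  simpa [adjugate_fin_two] using (congrFun₂ (star_mat_eq_adjugate g) 0 0).symm

lemma mat_one_zero : g.mat 1 0 = -conj (g.mat 0 1) := by
  simpa [adjugate_fin_two] using congrArg Neg.neg (congrFun₂ (star_mat_eq_adjugate g) 1 0).symm

lemma normSq_add_normSq : normSq (g.mat 0 0) + normSq (g.mat 0 1) = 1 := by
  have h := det_mat g
  rw [det_fin_two, mat_one_one, mat_one_zero, mul_neg, sub_neg_eq_add, mul_conj, mul_conj] at h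
  exact_mod_cast h

def ofFirstRow (a b : ℂ) (h : normSq a + normSq b = 1) : SU2 :=
  have h' : a * conj a + b * conj b = 1 := by rw [mul_conj, mul_conj]; exact_mod_cast h
  ⟨⟨!![a, b; -conj b, conj a], by
    rw [Matrix.mem_unitaryGroup_iff]
    ext i j
    fin_cases i <;> fin_cases j <;>
      simp [Matrix.mul_apply, Matrix.star_eq_conjTranspose] <;>
      first | linear_combination h' | ring⟩, by
    change (!![a, b; -conj b, conj a]).det = 1
    simpa [det_fin_two] using h'⟩

@[simp] lemma ofFirstRow_mat (a b : ℂ) (h : normSq a + normSq b = 1) :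
    (ofFirstRow a b h).mat = !![a, b; -conj b, conj a] := rfl

lemma mul_mat (g₁ g₂ : SU2) : (g₁ * g₂).mat = g₁.mat * g₂.mat := rfl

lemma trace_mat : g.mat.trace = ((2 * (g.mat 0 0).re : ℝ) : ℂ) := by
  rw [trace_fin_two, mat_one_one, add_conj]

lemma trace_mat_eq_ofReal_iff (c : ℝ) :
    g.mat.trace = ((2 * c : ℝ) : ℂ) ↔ (g.mat 0 0).re = c := by
  rw [trace_mat, ofReal_inj, mul_right_inj' two_ne_zero]

/-- The vector part of `g`, viewed as the unit quaternion `a + b j` with `(a, b)` its first row. -/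
def imVec : Fin 3 → ℝ := ![(g.mat 0 0).im, (g.mat 0 1).re, (g.mat 0 1).im]

lemma sum_imVec_sq : ∑ i, g.imVec i ^ 2 = 1 - (g.mat 0 0).re ^ 2 := by
  have h := normSq_add_normSq g
  simp only [normSq_apply] at h
  simp only [imVec, Fin.sum_univ_three, Matrix.cons_val]
  linear_combination h

lemma re_mul_mat (g₁ g₂ : SU2) :
    ((g₁ * g₂).mat 0 0).re =
      (g₁.mat 0 0).re * (g₂.mat 0 0).re - ∑ i, g₁.imVec i * g₂.imVec i := by
  simp only [mul_mat, mul_apply, Fin.sum_univ_two, mat_one_zero, imVec, Fin.sum_univ_three,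
    Matrix.cons_val]
  simp only [add_re, mul_re, neg_re, neg_im, conj_re, conj_im]
  ring

theorem exists_re_mul_iff {c₁ c₂ : ℝ} (t : ℝ) (h₁ : c₁ ^ 2 ≤ 1) (h₂ : c₂ ^ 2 ≤ 1) :
    (∃ g₁ g₂ : SU2, (g₁.mat 0 0).re = c₁ ∧ (g₂.mat 0 0).re = c₂ ∧ ((g₁ * g₂).mat 0 0).re = t) ↔
      |c₁ * c₂ - t| ≤ √(1 - c₁ ^ 2) * √(1 - c₂ ^ 2) := by
  constructor
  · rintro ⟨g₁, g₂, rfl, rfl, rfl⟩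
    rw [re_mul_mat, sub_sub_cancel, ← sum_imVec_sq, ← sum_imVec_sq]
    exact abs_sum_mul_le_sqrt_mul_sqrt _ _ _
  · intro h
    set s₁ := √(1 - c₁ ^ 2)
    set s₂ := √(1 - c₂ ^ 2)
    have hs₁sq : s₁ ^ 2 = 1 - c₁ ^ 2 := Real.sq_sqrt (by linarith)
    have hs₂sq : s₂ ^ 2 = 1 - c₂ ^ 2 := Real.sq_sqrt (by linarith)
    -- `g₁` and `g₂` have vector parts `(s₁, 0, 0)` and `(x, y, 0)`, with `s₁ x = c₁ c₂ - t`
    set x := (c₁ * c₂ - t) / s₁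
    have hs₁x : s₁ * x = c₁ * c₂ - t := by
      rcases eq_or_ne s₁ 0 with hs | hs
      · rw [hs, zero_mul] at h ⊢
        exact (abs_nonpos_iff.mp h).symm
      · exact mul_div_cancel₀ _ hs
    have hx : x ^ 2 ≤ s₂ ^ 2 := by
      rcases eq_or_ne s₁ 0 with hs | hs
      · simpa [x, hs] using sq_nonneg s₂
      · have hpos : 0 < s₁ := (Real.sqrt_nonneg _).lt_of_ne' hs
        rw [← hs₁x, abs_mul, abs_of_pos hpos] at h
        rw [← sq_abs x]
        exact pow_le_pow_left₀ (abs_nonneg x) (le_of_mul_le_mul_left h hpos) 2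
    set y := √(s₂ ^ 2 - x ^ 2)
    have hy : y ^ 2 = s₂ ^ 2 - x ^ 2 := Real.sq_sqrt (by linarith)
    have hg₁ : normSq (c₁ + s₁ * I) + normSq 0 = 1 := by
      rw [normSq_add_mul_I, map_zero]; linarith
    have hg₂ : normSq (c₂ + x * I) + normSq y = 1 := by
      rw [normSq_add_mul_I, normSq_ofReal]; nlinarith
    refine ⟨ofFirstRow _ _ hg₁, ofFirstRow _ _ hg₂, by simp, by simp, ?_⟩
    simp [re_mul_mat, imVec, Fin.sum_univ_three, hs₁x]

end SU2

namespace Real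

variable {α β γ : ℝ}

lemma cos_le_cos_sub_iff (hα : α ∈ Set.Icc 0 π) (hβ : β ∈ Set.Icc 0 π)
    (hγ : γ ∈ Set.Icc 0 π) : cos γ ≤ cos (α - β) ↔ |α - β| ≤ γ := by
  have hαβ : |α - β| ∈ Set.Icc 0 π :=
    ⟨abs_nonneg _, abs_sub_le_iff.mpr ⟨by linarith [hα.2, hβ.1], by linarith [hα.1, hβ.2]⟩⟩
  rw [← cos_abs (α - β), strictAntiOn_cos.le_iff_ge hγ hαβ]

lemma cos_add_le_cos_iff (hα : α ∈ Set.Icc 0 π) (hβ : β ∈ Set.Icc 0 π)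
    (hγ : γ ∈ Set.Icc 0 π) : cos (α + β) ≤ cos γ ↔ γ ≤ α + β ∧ α + β + γ ≤ 2 * π := by
  rcases le_total (α + β) π with h | h
  · rw [strictAntiOn_cos.le_iff_ge ⟨by linarith [hα.1, hβ.1], h⟩ hγ]
    exact ⟨fun hγαβ ↦ ⟨hγαβ, by linarith [hγ.2]⟩, And.left⟩
  · rw [← cos_two_pi_sub, strictAntiOn_cos.le_iff_ge ⟨by linarith [hα.2, hβ.2], by linarith⟩ hγ]
    exact ⟨fun hγαβ ↦ ⟨by linarith [hγ.2], by linarith⟩, fun hγαβ ↦ by linarith [hγαβ.2]⟩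

theorem abs_cos_mul_cos_sub_cos_le_sin_mul_sin_iff (hα : α ∈ Set.Icc 0 π)
    (hβ : β ∈ Set.Icc 0 π) (hγ : γ ∈ Set.Icc 0 π) :
    |cos α * cos β - cos γ| ≤ sin α * sin β ↔ |α - β| ≤ γ ∧ γ ≤ α + β ∧ α + β + γ ≤ 2 * π := by
  have hsub : -(sin α * sin β) ≤ cos α * cos β - cos γ ↔ cos γ ≤ cos (α - β) := by
    rw [cos_sub]; constructor <;> intro h <;> linarith
  have hadd : cos α * cos β - cos γ ≤ sin α * sin β ↔ cos (α + β) ≤ cos γ := by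
    rw [cos_add]; constructor <;> intro h <;> linarith
  rw [abs_le, hsub, hadd, cos_le_cos_sub_iff hα hβ hγ, cos_add_le_cos_iff hα hβ hγ]

end Real

/-- Triangle inequalities for conjugacy classes in `SU(2)`: the triple
`(θ₁, θ₂, θ₃) ∈ [0,2π]³` can be realized as the classes of `g₁`, `g₂` and `g₁ g₂`
(where the class of `g` is determined by `tr g = 2 cos (θ/2)`) if and only if
`|θ₁ − θ₂| ≤ θ₃ ≤ θ₁ + θ₂` and `θ₁ + θ₂ + θ₃ ≤ 4π`. -/
theorem triangle_inequalities_conjugacy_classes_SU2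
    (θ₁ θ₂ θ₃ : ℝ) (h₁ : θ₁ ∈ Set.Icc 0 (2 * π)) (h₂ : θ₂ ∈ Set.Icc 0 (2 * π))
    (h₃ : θ₃ ∈ Set.Icc 0 (2 * π)) :
    (∃ g₁ g₂ : SU2,
        Matrix.trace g₁.mat = ((2 * Real.cos (θ₁ / 2) : ℝ) : ℂ) ∧
        Matrix.trace g₂.mat = ((2 * Real.cos (θ₂ / 2) : ℝ) : ℂ) ∧
        Matrix.trace (g₁ * g₂).mat = ((2 * Real.cos (θ₃ / 2) : ℝ) : ℂ)) ↔
      (|θ₁ - θ₂| ≤ θ₃ ∧ θ₃ ≤ θ₁ + θ₂ ∧ θ₁ + θ₂ + θ₃ ≤ 4 * π) := by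
  have half_mem : ∀ θ ∈ Set.Icc 0 (2 * π), θ / 2 ∈ Set.Icc 0 π :=
    fun θ hθ ↦ ⟨by linarith [hθ.1], by linarith [hθ.2]⟩
  have hα := half_mem θ₁ h₁
  have hβ := half_mem θ₂ h₂
  have hγ := half_mem θ₃ h₃
  simp only [SU2.trace_mat_eq_ofReal_iff]
  rw [SU2.exists_re_mul_iff _ (cos_sq_le_one _) (cos_sq_le_one _),
    ← sin_eq_sqrt_one_sub_cos_sq hα.1 hα.2, ← sin_eq_sqrt_one_sub_cos_sq hβ.1 hβ.2,
    abs_cos_mul_cos_sub_cos_le_sin_mul_sin_iff hα hβ hγ, ← sub_div, abs_div, abs_two]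
  constructor <;> rintro ⟨h, h', h''⟩ <;> refine ⟨?_, ?_, ?_⟩ <;> linarith

end
end
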